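/- Explicit solution of the optimality system for v₀ = v_T = 0: let T > 0, q₀, q̃ ∈ ℝ, D := 2·(cosh(T) − 1) − T·sinh(T) ≠ 0, and define x : ℝ → ℝ⁴ by x₁(t) = q₀ + q̃·((cosh(t) − 1) + (cosh(T) − cosh(T − t)) − t·sinh(T))/D, x₂(t) = q̃·(sinh(t) + sinh(T − t) − sinh(T))/D, x₃(t) = q̃·sinh(T)/D, x₄(t) = q̃·(cosh(t)·(cosh(T) − 1) − sinh(t)·sinh(T))/D. Then x is differentiable and satisfies x'(t) = H·x(t) for all t ∈ ℝ, where H is the 4×4 real matrix with rows (0, 1, 0, 0), (0, 0, 0, −1), (0, 0, 0, 0), (0, −1, −1, 0); moreover x₁(0) = q₀, x₁(T) = q₀ + q̃, and x₂(0) = x₂(T) = 0. -/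

import Mathlib

/-! The equations `x' = H x` are checked componentwise, using the subtraction formulas for
`cosh (T - t)` and `sinh (T - t)`. The only non-trivial point is `D ≠ 0`: with `s = T / 2` the
half-angle formulas give `D = 4 sinh s (sinh s - s cosh s)`, and `sinh s < s cosh s` for `s > 0`
because `u cosh u - sinh u` has derivative `u sinh u > 0`. -/

open Real

lemma Real.sinh_lt_mul_cosh {s : ℝ} (hs : 0 < s) : sinh s < s * cosh s := by
  have hmono : StrictMonoOn (fun u => u * cosh u - sinh u) (Set.Ici 0) := by
    refine strictMonoOn_of_deriv_pos (convex_Ici 0) (by fun_prop) fun u hu => ?_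
    rw [interior_Ici, Set.mem_Ioi] at hu
    have hderiv : HasDerivAt (fun u => u * cosh u - sinh u)
        (1 * cosh u + u * sinh u - cosh u) u :=
      ((hasDerivAt_id' u).mul (hasDerivAt_cosh u)).sub (hasDerivAt_sinh u)
    rw [hderiv.deriv, one_mul, add_sub_cancel_left]
    exact mul_pos hu (sinh_pos_iff.2 hu)
  simpa using hmono Set.self_mem_Ici hs.le hs

lemma two_mul_cosh_sub_one_sub_mul_sinh_neg {T : ℝ} (hT : 0 < T) :
    2 * (cosh T - 1) - T * sinh T < 0 := by
  have hs : 0 < T / 2 := half_pos hT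
  have hcosh : cosh T - 1 = 2 * sinh (T / 2) ^ 2 := by
    have h := cosh_two_mul (T / 2)
    rw [mul_div_cancel₀ T two_ne_zero, cosh_sq] at h
    linarith
  have hsinh : sinh T = 2 * sinh (T / 2) * cosh (T / 2) := by
    rw [← sinh_two_mul, mul_div_cancel₀ T two_ne_zero]
  rw [hcosh, hsinh]
  nlinarith [sinh_pos_iff.2 hs, sinh_lt_mul_cosh hs]

lemma hamiltonian_mulVec (q v l₁ l₂ : ℝ) :
    Matrix.mulVec !![0, 1, 0, 0; 0, 0, 0, -1; 0, 0, 0, 0; 0, -1, -1, 0] ![q, v, l₁, l₂] =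
      ![v, -l₂, 0, -v - l₁] := by
  ext i; fin_cases i <;> simp [Matrix.mulVec, dotProduct, Fin.sum_univ_four, sub_eq_add_neg]

lemma hasDerivAt_vec4 {𝕜 F : Type*} [NontriviallyNormedField 𝕜] [NormedAddCommGroup F]
    [NormedSpace 𝕜 F] {f₀ f₁ f₂ f₃ : 𝕜 → F} {a b c d : F} {t : 𝕜} (h₀ : HasDerivAt f₀ a t)
    (h₁ : HasDerivAt f₁ b t) (h₂ : HasDerivAt f₂ c t) (h₃ : HasDerivAt f₃ d t) :
    HasDerivAt (fun s => ![f₀ s, f₁ s, f₂ s, f₃ s]) ![a, b, c, d] t :=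
  h₀.finCons <| h₁.finCons <| h₂.finCons <| h₃.finCons <|
    (hasDerivAt_const t ![]).congr_deriv (Subsingleton.elim _ _)

/-- Explicit solution of the optimality system for `v₀ = v_T = 0`: for `T > 0`
and `q₀, q̃ ∈ ℝ`, with `D = 2 (cosh T - 1) - T sinh T ≠ 0`, the curve `x : ℝ → ℝ⁴`
with components
`x₁ t = q₀ + q̃ ((cosh t - 1) + (cosh T - cosh (T - t)) - t sinh T) / D`,
`x₂ t = q̃ (sinh t + sinh (T - t) - sinh T) / D`,
`x₃ t = q̃ sinh T / D`,
`x₄ t = q̃ (cosh t (cosh T - 1) - sinh t sinh T) / D`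
solves `x' = H x` and satisfies the boundary conditions
`x₁ 0 = q₀`, `x₁ T = q₀ + q̃`, `x₂ 0 = x₂ T = 0`. -/
theorem optimality_system_explicit_solution (T : ℝ) (hT : 0 < T) (q₀ qtilde : ℝ)
    (H : Matrix (Fin 4) (Fin 4) ℝ)
    (hH : H = !![0, 1, 0, 0; 0, 0, 0, -1; 0, 0, 0, 0; 0, -1, -1, 0])
    (D : ℝ) (hD : D = 2 * (Real.cosh T - 1) - T * Real.sinh T)
    (x : ℝ → Fin 4 → ℝ)
    (hx : x = fun t =>
      ![q₀ + qtilde * ((Real.cosh t - 1) + (Real.cosh T - Real.cosh (T - t)) -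
          t * Real.sinh T) / D,
        qtilde * (Real.sinh t + Real.sinh (T - t) - Real.sinh T) / D,
        qtilde * Real.sinh T / D,
        qtilde * (Real.cosh t * (Real.cosh T - 1) - Real.sinh t * Real.sinh T) / D]) :
    D ≠ 0 ∧
      (∀ t : ℝ, HasDerivAt x (H.mulVec (x t)) t) ∧
      x 0 0 = q₀ ∧ x T 0 = q₀ + qtilde ∧ x 0 1 = 0 ∧ x T 1 = 0 := by
  have hD₀ : D ≠ 0 := hD ▸ (two_mul_cosh_sub_one_sub_mul_sinh_neg hT).ne
  subst hx hH
  refine ⟨hD₀, fun t => ?_, by simp, ?_, by simp, by simp⟩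
  · have hsub : HasDerivAt (fun t => T - t) (-1) t := (hasDerivAt_id' t).const_sub T
    rw [hamiltonian_mulVec]
    refine hasDerivAt_vec4 ?_ ?_ (hasDerivAt_const t _) ?_
    · refine (((((hasDerivAt_cosh t).sub_const 1).add (hsub.cosh.const_sub _)).sub
        ((hasDerivAt_id' t).mul_const _)).const_mul qtilde |>.div_const D |>.const_add q₀)
        |>.congr_deriv ?_
      ring
    · refine ((((hasDerivAt_sinh t).add hsub.sinh).sub_const _).const_mul qtilde
        |>.div_const D).congr_deriv ?_
      rw [cosh_sub]; ring
    · refine ((((hasDerivAt_cosh t).mul_const _).sub ((hasDerivAt_sinh t).mul_const _)).const_mul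
        qtilde |>.div_const D).congr_deriv ?_
      rw [sinh_sub]; ring
  · have hDT : cosh T - 1 + (cosh T - 1) - T * sinh T = D := by rw [hD]; ring
    simp [hDT, hD₀]
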